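/- arXiv:2302.03121 — 8 statements merged into one kernel-verified Lean document; each statement's English description precedes it below -/
import Mathlib

section
/- Let G and H be finite abelian groups and F : G → H a perfect nonlinear function. Then the sum over all β ∈ H of |F⁻¹(β)|² equals |G| + (|G|/|H|)·(|G|−1). -/
open Finset

/-!
Counting the pairs `(x, y)` with `F x = F y` fibrewise gives `∑ β, |F⁻¹(β)|²`; counting them by the
difference `a = y - x` gives `∑ a, #{x | F (x + a) = F x}`. The shift `a = 0` contributes `|G|`, and
perfect nonlinearity (with `b = 0`) makes each of the other `|G| - 1` shifts contribute `|G| / |H|`.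
-/

theorem sum_card_fiber_sq_eq_sum_card_filter_eq {α β : Type*} [Fintype α] [Fintype β]
    [DecidableEq β] (f : α → β) :
    ∑ b : β, #{x | f x = b} ^ 2 = ∑ x : α, #{y | f y = f x} := by
  rw [← sum_fiberwise univ f fun x => #{y | f y = f x}]
  refine sum_congr rfl fun b _ => ?_
  rw [sum_congr rfl fun x hx => by rw [(mem_filter.mp hx).2], sum_const, smul_eq_mul, sq]

theorem card_filter_eq_eq_card_filter_add_eq {G H : Type*} [AddGroup G] [Fintype G]
    [DecidableEq H] (F : G → H) (x : G) :
    #{y | F y = F x} = #{a | F (x + a) = F x} :=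
  card_nbij' (-x + ·) (x + ·) (fun y hy => by simpa using hy) (fun a ha => by simpa using ha)
    (fun y _ => by simp) (fun a _ => by simp)

theorem sum_card_fiber_sq_eq_sum_card_shift {G H : Type*} [AddGroup G] [Fintype G]
    [Fintype H] [DecidableEq H] (F : G → H) :
    ∑ β : H, #{x | F x = β} ^ 2 = ∑ a : G, #{x | F (x + a) = F x} := by
  rw [sum_card_fiber_sq_eq_sum_card_filter_eq]
  simp only [card_filter_eq_eq_card_filter_add_eq F, card_filter]
  exact sum_comm

/-- Value distribution identity for perfect nonlinear functions:
`∑_{β ∈ H} |F⁻¹(β)|² = |G| + (|G|/|H|)(|G|−1)`. -/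
theorem sum_sq_preimages_of_perfect_nonlinear
    {G H : Type*} [AddCommGroup G] [Fintype G]
    [AddCommGroup H] [Fintype H] [DecidableEq H] (F : G → H)
    (hPN : ∀ a : G, a ≠ 0 → ∀ b : H,
      (Finset.univ.filter fun x => F (x + a) - F x = b).card * Fintype.card H
        = Fintype.card G) :
    (∑ β : H, ((Finset.univ.filter fun x => F x = β).card : ℚ) ^ 2)
      = (Fintype.card G : ℚ)
        + ((Fintype.card G : ℚ) / (Fintype.card H : ℚ)) * ((Fintype.card G : ℚ) - 1) := by
  classical
  have hH : (Fintype.card H : ℚ) ≠ 0 := Nat.cast_ne_zero.mpr Fintype.card_ne_zero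
  have hshift : ∀ a ∈ univ.erase (0 : G),
      (#{x | F (x + a) = F x} : ℚ) = Fintype.card G / Fintype.card H := by
    intro a ha
    rw [eq_div_iff hH]
    exact_mod_cast by simpa only [sub_eq_zero] using hPN a (ne_of_mem_erase ha) 0
  have hsum := congrArg (Nat.cast : ℕ → ℚ) (sum_card_fiber_sq_eq_sum_card_shift F)
  push_cast at hsum
  rw [hsum, ← add_sum_erase _ _ (mem_univ 0), sum_congr rfl hshift, sum_const,
    card_erase_of_mem (mem_univ 0), card_univ, nsmul_eq_mul,
    Nat.cast_sub Fintype.card_pos]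
  simp only [add_zero, filter_true, card_univ, Nat.cast_one]
  ring
end

section
/- Let G and H be finite abelian groups and F : G → H a perfect nonlinear function. Then for every β ∈ H, |G|/|H| − √|G| + √|G|/|H| ≤ |F⁻¹(β)| ≤ |G|/|H| + √|G| − √|G|/|H|. -/
/-!
For an additive character `ψ` of `H` put `S ψ = ∑ₓ ψ (F x)`. Expanding `|S ψ|²` as a sum over
shifts `a`, perfect nonlinearity makes each derivative `x ↦ F (x + a) - F x` with `a ≠ 0` balanced,
so its character sum vanishes for `ψ ≠ 0` and only `a = 0` survives: `|S ψ|² = |G|`.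
Fourier inversion on `H` writes `|H| · |F⁻¹(β)| - |G|` as a sum of `|H| - 1` terms `ψ (-β) · S ψ`,
each of absolute value `√|G|`, and the triangle inequality gives both bounds.
-/

open Finset

theorem AddChar.sum_comp_eq_zero_of_card_fiber_eq {G H R : Type*} [Fintype G] [AddGroup H]
    [Fintype H] [DecidableEq H] [CommSemiring R] [IsDomain R]
    {ψ : AddChar H R} (hψ : ψ ≠ 0) (D : G → H) (c : ℕ) (hD : ∀ b, #{x | D x = b} = c) :
    ∑ x, ψ (D x) = 0 := by
  rw [← sum_fiberwise' univ D ψ]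
  simp only [sum_const, hD, ← smul_sum, AddChar.sum_eq_ite ψ, if_neg hψ, smul_zero]

section

variable {G H : Type*} [Fintype G] [AddCommGroup H] [Fintype H]

def IsPerfectNonlinear [AddCommGroup G] [DecidableEq H] (F : G → H) : Prop :=
  ∀ a : G, a ≠ 0 → ∀ b : H,
    #{x | F (x + a) - F x = b} * Fintype.card H = Fintype.card G

def charSum (F : G → H) (ψ : AddChar H ℂ) : ℂ := ∑ x, ψ (F x)

theorem charSum_mul_conj [AddCommGroup G] (F : G → H) (ψ : AddChar H ℂ) :
    charSum F ψ * starRingEnd ℂ (charSum F ψ) = ∑ a, ∑ x, ψ (F (x + a) - F x) := by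
  simp only [charSum, map_sum, sum_mul_sum, ← AddChar.map_neg_eq_conj, ← AddChar.map_add_eq_mul]
  rw [sum_comm]
  conv_rhs => rw [sum_comm]
  refine sum_congr rfl fun y _ => ?_
  exact (Fintype.sum_equiv (Equiv.addLeft y) _ _ fun a => by simp [sub_eq_add_neg]).symm

theorem IsPerfectNonlinear.norm_charSum [AddCommGroup G] [DecidableEq H] {F : G → H}
    (hF : IsPerfectNonlinear F) {ψ : AddChar H ℂ} (hψ : ψ ≠ 0) :
    ‖charSum F ψ‖ = √(Fintype.card G) := by
  have derivative_sum_eq_zero : ∀ a ≠ 0, ∑ x, ψ (F (x + a) - F x) = 0 := fun a ha =>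
    AddChar.sum_comp_eq_zero_of_card_fiber_eq hψ _ (Fintype.card G / Fintype.card H)
      fun b => Nat.eq_div_of_mul_eq_left Fintype.card_ne_zero (hF a ha b)
  have hsq : charSum F ψ * starRingEnd ℂ (charSum F ψ) = Fintype.card G := by
    rw [charSum_mul_conj, Fintype.sum_eq_single 0 derivative_sum_eq_zero]
    simp
  rw [Complex.mul_conj] at hsq
  rw [Complex.norm_def, show Complex.normSq (charSum F ψ) = Fintype.card G by exact_mod_cast hsq]

theorem card_mul_card_preimage_eq_sum_charSum [DecidableEq H] (F : G → H) (β : H) :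
    (Fintype.card H : ℂ) * #{x | F x = β} = ∑ ψ : AddChar H ℂ, ψ (-β) * charSum F ψ := by
  have orthogonality : ∀ x, ∑ ψ : AddChar H ℂ, ψ (F x - β)
      = if F x = β then (Fintype.card H : ℂ) else 0 := fun x => by
    simp [AddChar.sum_apply_eq_ite, sub_eq_zero]
  calc (Fintype.card H : ℂ) * #{x | F x = β} = ∑ x, ∑ ψ : AddChar H ℂ, ψ (F x - β) := by
        rw [sum_congr rfl fun x _ => orthogonality x, ← sum_filter, sum_const, nsmul_eq_mul,
          mul_comm]
    _ = ∑ ψ : AddChar H ℂ, ψ (-β) * charSum F ψ := by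
        rw [sum_comm]
        simp only [charSum, mul_sum, ← AddChar.map_add_eq_mul, neg_add_eq_sub]

theorem IsPerfectNonlinear.abs_card_mul_card_preimage_sub_card_le [AddCommGroup G]
    [DecidableEq H] {F : G → H} (hF : IsPerfectNonlinear F) (β : H) :
    |(Fintype.card H : ℝ) * #{x | F x = β} - Fintype.card G|
      ≤ (Fintype.card H - 1) * √(Fintype.card G) := by
  have hsplit : (((Fintype.card H : ℝ) * #{x | F x = β} - Fintype.card G : ℝ) : ℂ)
      = ∑ ψ ∈ univ.erase (0 : AddChar H ℂ), ψ (-β) * charSum F ψ := by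
    push_cast
    rw [card_mul_card_preimage_eq_sum_charSum, ← add_sum_erase _ _ (mem_univ 0)]
    simp [charSum]
  rw [← Real.norm_eq_abs, ← Complex.norm_real, hsplit]
  calc _ ≤ ∑ ψ ∈ univ.erase (0 : AddChar H ℂ), ‖ψ (-β) * charSum F ψ‖ := norm_sum_le _ _
    _ = ∑ ψ ∈ univ.erase (0 : AddChar H ℂ), √(Fintype.card G) := sum_congr rfl fun ψ hψ => by
        rw [norm_mul, AddChar.norm_apply, one_mul, hF.norm_charSum (ne_of_mem_erase hψ)]
    _ = _ := by
        rw [sum_const, card_erase_of_mem (mem_univ _), card_univ, AddChar.card_eq, nsmul_eq_mul,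
          Nat.cast_sub Fintype.card_pos, Nat.cast_one]

end

/-- Bounds on the preimage set sizes of perfect nonlinear functions. -/
theorem preimage_card_bounds_of_perfect_nonlinear
    {G H : Type*} [AddCommGroup G] [Fintype G]
    [AddCommGroup H] [Fintype H] [DecidableEq H] (F : G → H)
    (hPN : ∀ a : G, a ≠ 0 → ∀ b : H,
      (Finset.univ.filter fun x => F (x + a) - F x = b).card * Fintype.card H
        = Fintype.card G) :
    ∀ β : H,
      (Fintype.card G : ℝ) / (Fintype.card H : ℝ) - Real.sqrt (Fintype.card G)
          + Real.sqrt (Fintype.card G) / (Fintype.card H : ℝ)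
        ≤ ((Finset.univ.filter fun x => F x = β).card : ℝ) ∧
      ((Finset.univ.filter fun x => F x = β).card : ℝ)
        ≤ (Fintype.card G : ℝ) / (Fintype.card H : ℝ) + Real.sqrt (Fintype.card G)
          - Real.sqrt (Fintype.card G) / (Fintype.card H : ℝ) := by
  intro β
  have hh : (0 : ℝ) < Fintype.card H := by exact_mod_cast Fintype.card_pos
  set q : ℝ := (Fintype.card G : ℝ)
  set h : ℝ := (Fintype.card H : ℝ)
  have hF : IsPerfectNonlinear F := hPN
  obtain ⟨lower, upper⟩ := abs_le.1 (hF.abs_card_mul_card_preimage_sub_card_le β)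
  constructor
  · rw [show q / h - √q + √q / h = (q - (h - 1) * √q) / h by field_simp; ring, div_le_iff₀ hh]
    linarith
  · rw [show q / h + √q - √q / h = (q + (h - 1) * √q) / h by field_simp; ring, le_div_iff₀ hh]
    linarith
end

section
/- Let G and H be finite abelian groups with |H| ≤ √|G|, and let F : G → H be perfect nonlinear. Then F is surjective. -/
/-!
If `F` is perfect nonlinear, every nonzero shift `a` has `F (x + a) = F x` for exactly
`|G| / |H|` points `x`, so the collision count `∑ c, |F⁻¹(c)|²` equals `|G| + (|G| - 1) |G| / |H|`.
Cauchy–Schwarz over the image of `F` gives `|G|² ≤ |F(G)| · ∑ c, |F⁻¹(c)|²`, and together these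
force `|G| ≤ (|H| - 1)²` as soon as `F` misses a value, contradicting `|H|² ≤ |G|`.
-/

open Finset

section Fibers

variable {G H : Type*} [Fintype G] [Fintype H] [DecidableEq H]

theorem card_sq_le_card_image_mul_sum_card_fiber_sq (F : G → H) :
    Fintype.card G ^ 2 ≤ #(univ.image F) * ∑ c, #{x | F x = c} ^ 2 :=
  calc Fintype.card G ^ 2 = (∑ c ∈ univ.image F, #{x | F x = c}) ^ 2 := by
        rw [← card_univ, ← card_eq_sum_card_image]
    _ ≤ #(univ.image F) * ∑ c ∈ univ.image F, #{x | F x = c} ^ 2 := sq_sum_le_card_mul_sum_sq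
    _ ≤ #(univ.image F) * ∑ c, #{x | F x = c} ^ 2 := by
        gcongr; exact subset_univ _

variable [AddGroup G]

theorem sum_card_fiber_sq_eq_sum_card_filter_add_eq (F : G → H) :
    ∑ c, #{x | F x = c} ^ 2 = ∑ a, #{x | F (x + a) = F x} := by
  have translate (x : G) : #{a | F (x + a) = F x} = #{y | F y = F x} := by
    simp only [card_filter]
    exact Fintype.sum_equiv (Equiv.addLeft x) _ _ fun _ => rfl
  calc ∑ c, #{x | F x = c} ^ 2
      = ∑ c, ∑ x with F x = c, #{y | F y = F x} := by
        refine sum_congr rfl fun c _ => ?_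
        rw [sum_congr rfl fun x hx => by rw [(mem_filter.mp hx).2], sum_const, smul_eq_mul, sq]
    _ = ∑ x, #{a | F (x + a) = F x} := by
        rw [sum_fiberwise]; simp only [translate]
    _ = ∑ a, #{x | F (x + a) = F x} := by
        simp only [card_filter]; exact sum_comm

variable {F : G → H}

theorem sum_card_fiber_sq_mul_add_card
    (hF : ∀ a ≠ 0, #{x | F (x + a) = F x} * Fintype.card H = Fintype.card G) :
    (∑ c, #{x | F x = c} ^ 2) * Fintype.card H + Fintype.card G
      = Fintype.card G * (Fintype.card H + Fintype.card G) := by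
  classical
  have h_zero : #{x | F (x + 0) = F x} = Fintype.card G := by simp
  rw [sum_card_fiber_sq_eq_sum_card_filter_add_eq, sum_mul,
    ← add_sum_erase _ _ (mem_univ 0), sum_congr rfl fun a ha => hF a (ne_of_mem_erase ha),
    sum_const, card_erase_of_mem (mem_univ 0), card_univ, smul_eq_mul, h_zero]
  obtain ⟨n, hn⟩ := Nat.exists_eq_add_one.mpr (Fintype.card_pos (α := G))
  rw [hn, Nat.add_sub_cancel]
  ring

theorem card_mul_card_add_card_image_le
    (hF : ∀ a ≠ 0, #{x | F (x + a) = F x} * Fintype.card H = Fintype.card G) :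
    Fintype.card G * Fintype.card H + #(univ.image F)
      ≤ #(univ.image F) * (Fintype.card H + Fintype.card G) := by
  set g := Fintype.card G
  set k := #(univ.image F)
  refine le_of_mul_le_mul_left ?_ (Fintype.card_pos : 0 < g)
  calc g * (g * Fintype.card H + k) = g ^ 2 * Fintype.card H + g * k := by ring
    _ ≤ k * (∑ c, #{x | F x = c} ^ 2) * Fintype.card H + g * k := by
        gcongr; exact card_sq_le_card_image_mul_sum_card_fiber_sq F
    _ = k * ((∑ c, #{x | F x = c} ^ 2) * Fintype.card H + g) := by ring
    _ = g * (k * (Fintype.card H + g)) := by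
        rw [sum_card_fiber_sq_mul_add_card hF]; ring

theorem card_le_sq_of_not_surjective
    (hF : ∀ a ≠ 0, #{x | F (x + a) = F x} * Fintype.card H = Fintype.card G)
    (hF_surj : ¬ Function.Surjective F) :
    Fintype.card G ≤ (Fintype.card H - 1) ^ 2 := by
  have h_image : #(univ.image F) < Fintype.card H := by
    obtain ⟨b, hb⟩ := not_forall.mp hF_surj
    exact card_lt_univ_of_notMem (x := b) (by simpa using hb)
  obtain ⟨m, hm⟩ := Nat.exists_eq_add_of_lt h_image
  have := card_mul_card_add_card_image_le hF
  rw [hm] at this ⊢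
  simp only [Nat.add_sub_cancel]
  nlinarith

end Fibers

/-- Perfect nonlinear functions with `|H| ≤ √|G|` are surjective. -/
theorem surjective_of_perfect_nonlinear_of_sq_card_le
    {G H : Type*} [AddCommGroup G] [Fintype G]
    [AddCommGroup H] [Fintype H] [DecidableEq H] (F : G → H)
    (hPN : ∀ a : G, a ≠ 0 → ∀ b : H,
      (Finset.univ.filter fun x => F (x + a) - F x = b).card * Fintype.card H
        = Fintype.card G)
    (hcard : Fintype.card H ^ 2 ≤ Fintype.card G) :
    Function.Surjective F := by
  by_contra hF_surj
  have hF : ∀ a ≠ 0, #{x | F (x + a) = F x} * Fintype.card H = Fintype.card G :=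
    fun a ha => by simpa only [sub_eq_zero] using hPN a ha 0
  have h_le := card_le_sq_of_not_surjective hF hF_surj
  have h_lt : (Fintype.card H - 1) ^ 2 < Fintype.card H ^ 2 :=
    Nat.pow_lt_pow_left (Nat.sub_lt Fintype.card_pos one_pos) two_ne_zero
  omega
end

section
/- Let G and H be finite abelian groups and F : G → H perfect nonlinear. Then the cardinality of the image of F satisfies |Im(F)| ≥ |G|·|H| / (|G| + |H| − 1). -/
/-!
Count the collisions `N = #{(x, y) | F x = F y}`. Grouped by the common value, `N` is the sum of
the squared fibre sizes, so Cauchy–Schwarz gives `|G|² ≤ |Im F| · N`. Grouped by the difference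
`a = y - x`, the shift `a = 0` contributes `|G|` and, by perfect nonlinearity, every other shift
contributes `|G| / |H|`, so `N · |H| = |G| (|G| + |H| - 1)`.
-/

open Finset

section Collisions

variable {α β : Type*} [Fintype α] [DecidableEq β]

theorem card_collisions_eq_sum_sq_card_fiber (f : α → β) :
    #{p : α × α | f p.1 = f p.2} = ∑ b ∈ univ.image f, #{x | f x = b} ^ 2 := by
  rw [card_eq_sum_card_fiberwise (f := fun p : α × α => f p.1) (t := univ.image f)
    fun p _ => mem_image_of_mem f (mem_univ p.1)]
  refine sum_congr rfl fun b _ => ?_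
  rw [sq, ← card_product, ← filter_product]
  congr 1
  ext p
  simp only [mem_filter, mem_univ, true_and, mem_product]
  constructor
  · rintro ⟨hp, rfl⟩
    exact ⟨rfl, hp.symm⟩
  · rintro ⟨h1, h2⟩
    exact ⟨h1.trans h2.symm, h1⟩

theorem sq_card_le_card_image_mul_card_collisions (f : α → β) :
    Fintype.card α ^ 2 ≤ #(univ.image f) * #{p : α × α | f p.1 = f p.2} := by
  rw [card_collisions_eq_sum_sq_card_fiber, ← card_univ, card_eq_sum_card_image f univ]
  exact sq_sum_le_card_mul_sum_sq

end Collisions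

section Shifts

variable {G β : Type*} [AddGroup G] [Fintype G] [DecidableEq β]

theorem card_collisions_eq_sum_card_eq_shift (f : G → β) :
    #{p : G × G | f p.1 = f p.2} = ∑ a, #{x | f (x + a) = f x} := by
  simp only [card_filter, Fintype.sum_prod_type]
  conv_rhs => rw [sum_comm]
  refine sum_congr rfl fun x _ => ?_
  rw [← Equiv.sum_comp (Equiv.addLeft x)]
  simp only [Equiv.coe_addLeft]
  exact sum_congr rfl fun a _ => if_congr eq_comm rfl rfl

theorem card_collisions_mul_eq_of_card_eq_shift_mul_eq (f : G → β) (n : ℕ)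
    (hf : ∀ a : G, a ≠ 0 → #{x | f (x + a) = f x} * n = Fintype.card G) :
    (#{p : G × G | f p.1 = f p.2} : ℚ) * n = Fintype.card G * (Fintype.card G + n - 1) := by
  classical
  rw [card_collisions_eq_sum_card_eq_shift, Nat.cast_sum, sum_mul,
    ← add_sum_erase _ _ (mem_univ 0)]
  have hzero : #{x | f (x + 0) = f x} = Fintype.card G := by simp
  have hnonzero : ∀ a ∈ univ.erase (0 : G), (#{x | f (x + a) = f x} : ℚ) * n = Fintype.card G :=
    fun a ha => by exact_mod_cast hf a (ne_of_mem_erase ha)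
  rw [hzero, sum_congr rfl hnonzero, sum_const, card_erase_of_mem (mem_univ 0), card_univ,
    nsmul_eq_mul, Nat.cast_sub Fintype.card_pos]
  push_cast
  ring

end Shifts

/-- Lower bound on the image set size of a perfect nonlinear function. -/
theorem image_card_lower_bound_of_perfect_nonlinear
    {G H : Type*} [AddCommGroup G] [Fintype G]
    [AddCommGroup H] [Fintype H] [DecidableEq H] (F : G → H)
    (hPN : ∀ a : G, a ≠ 0 → ∀ b : H,
      (Finset.univ.filter fun x => F (x + a) - F x = b).card * Fintype.card H
        = Fintype.card G) :
    ((Finset.univ.image F).card : ℚ)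
      ≥ ((Fintype.card G : ℚ) * (Fintype.card H : ℚ))
          / ((Fintype.card G : ℚ) + (Fintype.card H : ℚ) - 1) := by
  have hcollisions := card_collisions_mul_eq_of_card_eq_shift_mul_eq F
    (Fintype.card H) fun a ha => by simpa only [sub_eq_zero] using hPN a ha 0
  have hcauchy : (Fintype.card G : ℚ) ^ 2 ≤ #(univ.image F) * #{p : G × G | F p.1 = F p.2} := by
    exact_mod_cast sq_card_le_card_image_mul_card_collisions F
  have hq1 : (1 : ℚ) ≤ Fintype.card G := Nat.one_le_cast.mpr Fintype.card_pos
  have hn : (0 : ℚ) < Fintype.card H := by positivity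
  set q : ℚ := (Fintype.card G : ℚ)
  set n : ℚ := (Fintype.card H : ℚ)
  set N : ℚ := (#{p : G × G | F p.1 = F p.2} : ℚ)
  rw [ge_iff_le, div_le_iff₀ (by linarith)]
  refine le_of_mul_le_mul_left ?_ (by linarith : 0 < q)
  calc q * (q * n) = q ^ 2 * n := by ring
    _ ≤ #(univ.image F) * N * n := by gcongr
    _ = q * (#(univ.image F) * (q + n - 1)) := by rw [mul_assoc, hcollisions]; ring
end

section
/- Let p be an odd prime and F : 𝔽_{p^n} → 𝔽_{p^n} be perfect nonlinear (i.e., planar). Then (p^n + 1)/2 ≤ |Im(F)|. -/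
/-!
Let `m_b` be the size of the fibre of `F` over `b ∈ Im(F)`, so `∑ m_b = q := p^n`. Planarity says
that for each `a ≠ 0` exactly one `x` has `F (x + a) = F x`, so the pairs `(x, y)` with
`F x = F y` number `q + (q - 1)`; grouping them by the common value gives `∑ m_b² = 2q - 1`.
Since `(m - 1)(m - 2) ≥ 0` for every integer `m`, summing over `Im(F)` yields
`0 ≤ ∑ m_b² - 3 ∑ m_b + 2 |Im(F)| = 2 |Im(F)| - q - 1`.
-/

open Finset Function

theorem Finset.three_mul_sum_le_sum_sq_add_two_mul_card {ι : Type*} (s : Finset ι) (m : ι → ℤ) :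
    3 * ∑ i ∈ s, m i ≤ ∑ i ∈ s, m i ^ 2 + 2 * #s := by
  have term_le (k : ℤ) : 3 * k ≤ k ^ 2 + 2 := by
    rcases le_or_gt k 1 with h | h <;> nlinarith
  calc 3 * ∑ i ∈ s, m i = ∑ i ∈ s, 3 * m i := mul_sum ..
    _ ≤ ∑ i ∈ s, (m i ^ 2 + 2) := sum_le_sum fun i _ => term_le (m i)
    _ = ∑ i ∈ s, m i ^ 2 + 2 * #s := by rw [sum_add_distrib, sum_const, nsmul_eq_mul, mul_comm]

variable {α β : Type*} [Fintype α] [DecidableEq β]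

theorem card_filter_apply_eq_apply_eq_sum_sq (f : α → β) :
    #{xy : α × α | f xy.1 = f xy.2} = ∑ b ∈ univ.image f, #{x | f x = b} ^ 2 := by
  rw [card_eq_sum_card_fiberwise (f := fun xy => f xy.1) (t := univ.image f)
    (fun xy _ => mem_image_of_mem f (mem_univ _))]
  refine sum_congr rfl fun b _ => ?_
  rw [sq, ← card_product]
  congr 1
  ext ⟨x, y⟩
  simp only [mem_filter, mem_univ, true_and, mem_product]
  constructor
  · rintro ⟨hxy, rfl⟩; exact ⟨rfl, hxy.symm⟩
  · rintro ⟨hx, hy⟩; exact ⟨hx.trans hy.symm, hx⟩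

variable [AddGroup α]

theorem card_filter_apply_eq_apply_eq_sum_card_filter_add (f : α → β) :
    #{xy : α × α | f xy.1 = f xy.2} = ∑ a, #{x | f (x + a) = f x} := by
  simp only [card_filter, Fintype.sum_prod_type]
  conv_rhs => rw [sum_comm]
  refine sum_congr rfl fun x _ => ?_
  rw [← Equiv.sum_comp (Equiv.addLeft x)]
  simp only [Equiv.coe_addLeft, @eq_comm _ (f x)]

variable [AddGroup β]

def IsPlanar (f : α → β) : Prop :=
  ∀ a, a ≠ 0 → Bijective fun x => f (x + a) - f x

variable {f : α → β}

theorem IsPlanar.card_filter_add_eq_one (hf : IsPlanar f) {a : α} (ha : a ≠ 0) :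
    #{x | f (x + a) = f x} = 1 := by
  obtain ⟨x₀, hx₀, hunique⟩ := (hf a ha).existsUnique 0
  refine card_eq_one.mpr ⟨x₀, ?_⟩
  ext x
  simp only [mem_filter, mem_univ, true_and, mem_singleton, ← sub_eq_zero (a := f (x + a))]
  exact ⟨hunique x, fun h => h ▸ hx₀⟩

theorem IsPlanar.card_filter_apply_eq_apply [DecidableEq α] (hf : IsPlanar f) :
    #{xy : α × α | f xy.1 = f xy.2} + 1 = 2 * Fintype.card α := by
  rw [card_filter_apply_eq_apply_eq_sum_card_filter_add, ← add_sum_erase _ _ (mem_univ 0),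
    sum_congr rfl fun a ha => hf.card_filter_add_eq_one (ne_of_mem_erase ha)]
  simp only [add_zero, filter_true, card_univ, sum_const, card_erase_of_mem (mem_univ _),
    smul_eq_mul, mul_one]
  have := Fintype.card_pos (α := α)
  omega

theorem IsPlanar.card_add_one_le_two_mul_card_image [DecidableEq α] (hf : IsPlanar f) :
    Fintype.card α + 1 ≤ 2 * #(univ.image f) := by
  have hsum : (Fintype.card α : ℤ) = ∑ b ∈ univ.image f, (#{x | f x = b} : ℤ) := by
    exact_mod_cast card_eq_sum_card_image f univ
  have hsq : (∑ b ∈ univ.image f, (#{x | f x = b} : ℤ) ^ 2) + 1 = 2 * Fintype.card α := by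
    exact_mod_cast card_filter_apply_eq_apply_eq_sum_sq f ▸ hf.card_filter_apply_eq_apply
  have := three_mul_sum_le_sum_sq_add_two_mul_card (univ.image f) fun b => (#{x | f x = b} : ℤ)
  omega

theorem planar_image_card_lower_bound_general
    (p n : ℕ) [Fact p.Prime] (hn : 0 < n)
    [Fintype (GaloisField p n)] [DecidableEq (GaloisField p n)]
    (F : GaloisField p n → GaloisField p n)
    (hF : ∀ a : GaloisField p n, a ≠ 0 →
      Function.Bijective (fun x => F (x + a) - F x)) :
    p ^ n + 1 ≤ 2 * (Finset.univ.image F).card := by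
  have hcard : Fintype.card (GaloisField p n) = p ^ n := by
    rw [← Nat.card_eq_fintype_card]
    exact GaloisField.card p n hn.ne'
  exact hcard ▸ IsPlanar.card_add_one_le_two_mul_card_image hF

/-- Lower bound `(p^n+1)/2 ≤ |Im(F)|` on the image set size of a planar function. -/
theorem planar_image_card_lower_bound
    (p n : ℕ) [Fact p.Prime] (hp : Odd p) (hn : 0 < n)
    [Fintype (GaloisField p n)] [DecidableEq (GaloisField p n)]
    (F : GaloisField p n → GaloisField p n)
    (hF : ∀ a : GaloisField p n, a ≠ 0 →
      Function.Bijective (fun x => F (x + a) - F x)) :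
    p ^ n + 1 ≤ 2 * (Finset.univ.image F).card :=
  planar_image_card_lower_bound_general p n hn F hF
end

section
/- Let p be an odd prime and F : 𝔽_{p^n} → 𝔽_{p^n} a planar function satisfying F(x) = F(−x) for all x. Then F is 2-to-1: exactly one element of 𝔽_{p^n} has exactly one preimage under F, exactly (p^n − 1)/2 elements have exactly two preimages, and all other elements have no preimage. -/
/-!
If `F(x) = F(z)` with `z ≠ x`, then the derivative of `F` in direction `a = z - x` vanishes
at `x`, and by evenness also at `-z`; injectivity of that derivative forces `z = -x`.
So the fibres of `F` are the sets `{x, -x}`, which in a group of odd order have two elements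
except for `x = 0`. Counting the elements of the group fibre by fibre gives the rest.
-/

open Finset Function

theorem card_filter_card_fiber_eq_one_add_two_mul {α β : Type*} [Fintype α] [Fintype β]
    [DecidableEq β] {f : α → β} (h : ∀ y, #{x | f x = y} ≤ 2) :
    #{y | #{x | f x = y} = 1} + 2 * #{y | #{x | f x = y} = 2} = Fintype.card α := by
  have hsplit : ∀ y, #{x | f x = y} =
      (if #{x | f x = y} = 1 then 1 else 0) + 2 * (if #{x | f x = y} = 2 then 1 else 0) := by
    intro y
    have := h y
    split_ifs <;> omega
  rw [card_filter, card_filter, mul_sum, ← sum_add_distrib, ← card_univ,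
    card_eq_sum_card_fiberwise (fun x _ => mem_univ (f x))]
  exact (sum_congr rfl fun y _ => hsplit y).symm

theorem eq_zero_of_neg_eq_self_of_odd_card {G : Type*} [AddGroup G] (hG : Odd (Nat.card G))
    {x : G} (h : -x = x) : x = 0 :=
  (hG.coprime_two_right.nsmul_right_bijective).injective <| by
    simp only [two_nsmul, smul_zero]
    rw [← neg_add_cancel x, h]

section EvenPlanar

variable {G H : Type*} [AddCommGroup G] [AddGroup H] {F : G → H}

theorem eq_or_eq_neg_of_apply_eq (hF : ∀ a : G, a ≠ 0 → Injective fun x => F (x + a) - F x)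
    (heven : ∀ x, F x = F (-x)) {x z : G} (h : F x = F z) : z = x ∨ z = -x := by
  refine or_iff_not_imp_left.mpr fun hzx => ?_
  have hx : F (x + (z - x)) - F x = 0 := by rw [add_sub_cancel, ← h, sub_self]
  have hz : F (-z + (z - x)) - F (-z) = 0 := by
    rw [show -z + (z - x) = -x by abel, ← heven, ← heven, h, sub_self]
  rw [hF (z - x) (sub_ne_zero.mpr hzx) (hx.trans hz.symm), neg_neg]

variable [Fintype G] [DecidableEq G] [DecidableEq H]

theorem filter_apply_eq_apply_eq_pair
    (hF : ∀ a : G, a ≠ 0 → Injective fun x => F (x + a) - F x)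
    (heven : ∀ x, F x = F (-x)) (x : G) : ({z | F z = F x} : Finset G) = {x, -x} := by
  ext z
  simp only [mem_filter, mem_univ, true_and, mem_insert, mem_singleton]
  refine ⟨fun h => eq_or_eq_neg_of_apply_eq hF heven h.symm, ?_⟩
  rintro (rfl | rfl)
  exacts [rfl, (heven x).symm]

theorem card_fiber_le_two (hF : ∀ a : G, a ≠ 0 → Injective fun x => F (x + a) - F x)
    (heven : ∀ x, F x = F (-x)) (y : H) : #{x | F x = y} ≤ 2 := by
  obtain ⟨x, hx⟩ | hempty := ({x | F x = y} : Finset G).eq_empty_or_nonempty.symm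
  · rw [← (mem_filter.mp hx).2, filter_apply_eq_apply_eq_pair hF heven]
    exact card_le_two
  · simp [hempty]

theorem card_fiber_eq_one_iff (hG : Odd (Nat.card G))
    (hF : ∀ a : G, a ≠ 0 → Injective fun x => F (x + a) - F x)
    (heven : ∀ x, F x = F (-x)) (y : H) : #{x | F x = y} = 1 ↔ y = F 0 := by
  refine ⟨fun h => ?_, fun h => by simp [h, filter_apply_eq_apply_eq_pair hF heven]⟩
  obtain ⟨x, hx⟩ := card_eq_one.mp h
  have hFx : F x = y := by
    simpa using (hx.symm ▸ mem_singleton_self x : x ∈ ({x | F x = y} : Finset G))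
  have hneg : -x ∈ ({x | F x = y} : Finset G) := by simp [← heven, hFx]
  rw [hx, mem_singleton] at hneg
  rw [← hFx, eq_zero_of_neg_eq_self_of_odd_card hG hneg]

theorem two_to_one_of_even_of_injective_sub [Fintype H] (hG : Odd (Nat.card G))
    (hF : ∀ a : G, a ≠ 0 → Injective fun x => F (x + a) - F x)
    (heven : ∀ x, F x = F (-x)) :
    #{y | #{x | F x = y} = 1} = 1 ∧
    2 * #{y | #{x | F x = y} = 2} = Nat.card G - 1 ∧
    ∀ y, #{x | F x = y} ≤ 2 := by
  have hone : #{y | #{x | F x = y} = 1} = 1 := by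
    simp only [card_fiber_eq_one_iff hG hF heven, filter_eq', mem_univ, if_true, card_singleton]
  have hcount := card_filter_card_fiber_eq_one_add_two_mul (card_fiber_le_two hF heven)
  rw [hone, ← Nat.card_eq_fintype_card] at hcount
  exact ⟨hone, by omega, card_fiber_le_two hF heven⟩

end EvenPlanar

/-- A planar function with `F(x) = F(−x)` is 2-to-1: exactly one element has exactly
one preimage, exactly `(p^n−1)/2` elements have exactly two preimages, and every
element has at most two preimages (so all others have none). -/
theorem planar_even_is_two_to_one
    (p n : ℕ) [Fact p.Prime] (hp : Odd p) (hn : 0 < n)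
    [Fintype (GaloisField p n)] [DecidableEq (GaloisField p n)]
    (F : GaloisField p n → GaloisField p n)
    (hF : ∀ a : GaloisField p n, a ≠ 0 →
      Function.Bijective (fun x => F (x + a) - F x))
    (heven : ∀ x : GaloisField p n, F x = F (-x)) :
    (Finset.univ.filter fun y =>
        (Finset.univ.filter fun x => F x = y).card = 1).card = 1 ∧
    2 * (Finset.univ.filter fun y =>
        (Finset.univ.filter fun x => F x = y).card = 2).card = p ^ n - 1 ∧
    ∀ y : GaloisField p n, (Finset.univ.filter fun x => F x = y).card ≤ 2 := by
  have hcard := GaloisField.card p n hn.ne'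
  rw [← hcard]
  exact two_to_one_of_even_of_injective_sub (hcard ▸ hp.pow)
    (fun a ha => (hF a ha).injective) heven
end

section
/- Let F₁ : 𝔽_p^n → 𝔽_p^m and F₂ : 𝔽_p^k → 𝔽_p^m be perfect nonlinear functions, both almost balanced of type (+), i.e., there exist a₁ with |F₁⁻¹(a₁)| = p^{n−m} + p^{n/2} − p^{n/2−m} and |F₁⁻¹(a)| = p^{n−m} − p^{n/2−m} for all a ≠ a₁, and similarly a₂ for F₂ (with k in place of n). Then the direct sum F(x,y) = F₁(x) + F₂(y) satisfies |F⁻¹(a₁ + a₂)| = p^{n+k−m} + p^{(n+k)/2} − p^{(n+k)/2−m}. -/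
/-! Sorting the solutions of `F₁ x + F₂ y = a₁ + a₂` by the value `a = F₁ x` gives
`∑ a, |F₁⁻¹(a)| · |F₂⁻¹(a₁ + a₂ - a)|`. The term `a = a₁` pairs the two large fibres, each of the
other `p ^ m - 1` terms pairs two small fibres, and the resulting expression in `p` is an identity
once `(n + k) / 2 = n / 2 + k / 2`, which holds because `n` is even. -/

open Finset

section DirectSum

variable {α β G : Type*} [Fintype α] [Fintype β] [AddCommGroup G] [Fintype G] [DecidableEq G]

theorem card_filter_add_eq_sum_mul (f : α → G) (g : β → G) (c : G) :
    #{z : α × β | f z.1 + g z.2 = c} = ∑ a, #{x | f x = a} * #{y | g y = c - a} := by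
  rw [card_eq_sum_card_fiberwise (f := fun z : α × β => f z.1) (t := univ) fun _ _ => mem_univ _]
  refine sum_congr rfl fun a _ => ?_
  rw [← card_product]
  congr 1
  ext ⟨x, y⟩
  simp only [mem_filter, mem_univ, true_and, mem_product]
  constructor
  · rintro ⟨hc, rfl⟩
    exact ⟨rfl, eq_sub_of_add_eq' hc⟩
  · rintro ⟨rfl, hy⟩
    exact ⟨by rw [hy, add_sub_cancel], rfl⟩

theorem card_filter_add_eq_of_card_fiber (f : α → G) (g : β → G) (a₁ a₂ : G) {s₁ t₁ s₂ t₂ : ℤ}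
    (hf₁ : (#{x | f x = a₁} : ℤ) = s₁) (hf : ∀ a, a ≠ a₁ → (#{x | f x = a} : ℤ) = t₁)
    (hg₂ : (#{y | g y = a₂} : ℤ) = s₂) (hg : ∀ a, a ≠ a₂ → (#{y | g y = a} : ℤ) = t₂) :
    (#{z : α × β | f z.1 + g z.2 = a₁ + a₂} : ℤ)
      = s₁ * s₂ + (Fintype.card G - 1) * (t₁ * t₂) := by
  have hoff : ∀ a ∈ univ.erase a₁, (#{x | f x = a} : ℤ) * #{y | g y = a₁ + a₂ - a} = t₁ * t₂ := by
    intro a ha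
    have ha₁ : a ≠ a₁ := ne_of_mem_erase ha
    have ha₂ : a₁ + a₂ - a ≠ a₂ := by
      rw [Ne, sub_eq_iff_eq_add, add_comm a₁, add_left_cancel_iff]
      exact ha₁.symm
    rw [hf a ha₁, hg _ ha₂]
  rw [card_filter_add_eq_sum_mul]
  push_cast
  rw [← add_sum_erase _ _ (mem_univ a₁), sum_congr rfl hoff, sum_const,
    card_erase_of_mem (mem_univ a₁), card_univ, add_sub_cancel_left, hf₁, hg₂, nsmul_eq_mul,
    Nat.cast_sub Fintype.card_pos, Nat.cast_one]

end DirectSum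

theorem direct_sum_plus_plus_general
    (p n k m : ℕ) [Fact p.Prime]
    (hn : Even n) (hmn : m ≤ n / 2) (hmk : m ≤ k / 2)
    (F₁ : (Fin n → ZMod p) → (Fin m → ZMod p))
    (F₂ : (Fin k → ZMod p) → (Fin m → ZMod p))
    (a₁ a₂ : Fin m → ZMod p)
    (h₁u : ((Finset.univ.filter fun x => F₁ x = a₁).card : ℤ)
        = p ^ (n - m) + p ^ (n / 2) - p ^ (n / 2 - m))
    (h₁ : ∀ a : Fin m → ZMod p, a ≠ a₁ →
      ((Finset.univ.filter fun x => F₁ x = a).card : ℤ)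
        = p ^ (n - m) - p ^ (n / 2 - m))
    (h₂u : ((Finset.univ.filter fun y => F₂ y = a₂).card : ℤ)
        = p ^ (k - m) + p ^ (k / 2) - p ^ (k / 2 - m))
    (h₂ : ∀ a : Fin m → ZMod p, a ≠ a₂ →
      ((Finset.univ.filter fun y => F₂ y = a).card : ℤ)
        = p ^ (k - m) - p ^ (k / 2 - m)) :
    ((Finset.univ.filter fun z : (Fin n → ZMod p) × (Fin k → ZMod p) =>
        F₁ z.1 + F₂ z.2 = a₁ + a₂).card : ℤ)
      = p ^ (n + k - m) + p ^ ((n + k) / 2) - p ^ ((n + k) / 2 - m) := by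
  rw [card_filter_add_eq_of_card_fiber F₁ F₂ a₁ a₂ h₁u h₁ h₂u h₂]
  obtain ⟨i, hi⟩ := Nat.exists_eq_add_of_le hmn
  obtain ⟨j, hj⟩ := Nat.exists_eq_add_of_le hmk
  have hnk : (n + k) / 2 = m + (m + i + j) := by
    rw [Nat.add_div_of_dvd_right hn.two_dvd]; omega
  rw [hnk, hi, hj, show n + k - m = m + (n - m) + (k - m) by omega]
  simp only [Nat.add_sub_cancel_left, pow_add, Fintype.card_fun, ZMod.card, Fintype.card_fin]
  push_cast
  ring

/-- The direct sum of two almost balanced perfect nonlinear functions of type (+)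
has the unique preimage size of type (+). -/
theorem direct_sum_plus_plus
    (p n k m : ℕ) [Fact p.Prime]
    (hn : Even n) (hk : Even k) (hmn : m ≤ n / 2) (hmk : m ≤ k / 2)
    (F₁ : (Fin n → ZMod p) → (Fin m → ZMod p))
    (F₂ : (Fin k → ZMod p) → (Fin m → ZMod p))
    (hPN1 : ∀ a : Fin n → ZMod p, a ≠ 0 → ∀ b : Fin m → ZMod p,
      (Finset.univ.filter fun x => F₁ (x + a) - F₁ x = b).card * p ^ m = p ^ n)
    (hPN2 : ∀ a : Fin k → ZMod p, a ≠ 0 → ∀ b : Fin m → ZMod p,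
      (Finset.univ.filter fun y => F₂ (y + a) - F₂ y = b).card * p ^ m = p ^ k)
    (a₁ a₂ : Fin m → ZMod p)
    (h₁u : ((Finset.univ.filter fun x => F₁ x = a₁).card : ℤ)
        = p ^ (n - m) + p ^ (n / 2) - p ^ (n / 2 - m))
    (h₁ : ∀ a : Fin m → ZMod p, a ≠ a₁ →
      ((Finset.univ.filter fun x => F₁ x = a).card : ℤ)
        = p ^ (n - m) - p ^ (n / 2 - m))
    (h₂u : ((Finset.univ.filter fun y => F₂ y = a₂).card : ℤ)
        = p ^ (k - m) + p ^ (k / 2) - p ^ (k / 2 - m))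
    (h₂ : ∀ a : Fin m → ZMod p, a ≠ a₂ →
      ((Finset.univ.filter fun y => F₂ y = a).card : ℤ)
        = p ^ (k - m) - p ^ (k / 2 - m)) :
    ((Finset.univ.filter fun z : (Fin n → ZMod p) × (Fin k → ZMod p) =>
        F₁ z.1 + F₂ z.2 = a₁ + a₂).card : ℤ)
      = p ^ (n + k - m) + p ^ ((n + k) / 2) - p ^ ((n + k) / 2 - m) :=
  direct_sum_plus_plus_general p n k m hn hmn hmk F₁ F₂ a₁ a₂ h₁u h₁ h₂u h₂
end

section
/- Let n be even. The only integer solutions (up to permutation and overall sign) of the system H₁² + H₂² + H₃² + H₄² = 3·2^{n−2} and H₁ + H₂ + H₃ + H₄ = 0 are H₁ = H₂ = H₃ = 2^{n/2−2}, H₄ = −3·2^{n/2−2}, for n ≥ 4. -/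
/-!
Squares are `0`, `1` or `4` modulo `8`, so a sum of four squares is divisible by `8` only when
all four integers are even. For `n > 4` the right-hand side `3 · 2^(n-2)` is divisible by `8`,
hence every solution for `n` is twice a solution for `n - 2`. This descends to `n = 4`, where
`H₁² + H₂² + H₃² + H₄² = 12`, `∑ Hᵢ = 0` is a finite search leaving `±(1, 1, 1, -3)` up to
permutation.
-/

def IsSpike (s : ℤ) (H : Fin 4 → ℤ) : Prop :=
  ∃ ε : ℤ, (ε = 1 ∨ ε = -1) ∧ ∃ j : Fin 4,
    H j = -ε * 3 * s ∧ ∀ i : Fin 4, i ≠ j → H i = ε * s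

theorem isSpike_iff {s : ℤ} {H : Fin 4 → ℤ} :
    IsSpike s H ↔
      (∃ j : Fin 4, H j = -3 * s ∧ ∀ i : Fin 4, i ≠ j → H i = s) ∨
      (∃ j : Fin 4, H j = 3 * s ∧ ∀ i : Fin 4, i ≠ j → H i = -s) := by
  simp only [IsSpike, or_and_right, exists_or, exists_eq_left]
  norm_num

theorem IsSpike.two_mul {s : ℤ} {G : Fin 4 → ℤ} (h : IsSpike s G) :
    IsSpike (2 * s) (fun i => 2 * G i) := by
  obtain ⟨ε, hε, j, hj, hrest⟩ := h
  refine ⟨ε, hε, j, ?_, fun i hi => ?_⟩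
  · dsimp only
    rw [hj]; ring
  · dsimp only
    rw [hrest i hi]; ring

theorem isSpike_one_of_sum_sq_eq_twelve (H : Fin 4 → ℤ) (hsq : ∑ i, H i ^ 2 = 12)
    (hsum : ∑ i, H i = 0) : IsSpike 1 H := by
  obtain ⟨a, b, c, d, rfl⟩ : ∃ a b c d : ℤ, H = ![a, b, c, d] :=
    ⟨H 0, H 1, H 2, H 3, by ext i; fin_cases i <;> rfl⟩
  simp only [Fin.sum_univ_four, Matrix.cons_val] at hsq hsum
  obtain rfl : d = -(a + b + c) := by omega
  have ha : -3 ≤ a ∧ a ≤ 3 := by constructor <;> nlinarith [sq_nonneg b, sq_nonneg c]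
  have hb : -3 ≤ b ∧ b ≤ 3 := by constructor <;> nlinarith [sq_nonneg a, sq_nonneg c]
  have hc : -3 ≤ c ∧ c ≤ 3 := by constructor <;> nlinarith [sq_nonneg a, sq_nonneg b]
  obtain ⟨ha₁, ha₂⟩ := ha
  obtain ⟨hb₁, hb₂⟩ := hb
  obtain ⟨hc₁, hc₂⟩ := hc
  rw [isSpike_iff]
  interval_cases a <;> interval_cases b <;> interval_cases c <;> revert hsq <;> decide

theorem two_dvd_of_eight_dvd_sum_sq (H : Fin 4 → ℤ) (h : 8 ∣ ∑ i, H i ^ 2) (i : Fin 4) :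
    2 ∣ H i := by
  have mod_eight : ∀ a b c d : ZMod 8, a ^ 2 + b ^ 2 + c ^ 2 + d ^ 2 = 0 →
      4 * a = 0 ∧ 4 * b = 0 ∧ 4 * c = 0 ∧ 4 * d = 0 := by decide
  rw [Fin.sum_univ_four] at h
  replace h := (ZMod.intCast_zmod_eq_zero_iff_dvd _ 8).2 h
  push_cast at h
  have h4 : ((4 * H i : ℤ) : ZMod 8) = 0 := by
    obtain ⟨h0, h1, h2, h3⟩ := mod_eight _ _ _ _ h
    push_cast
    fin_cases i <;> assumption
  have := (ZMod.intCast_zmod_eq_zero_iff_dvd _ 8).1 h4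
  omega

theorem isSpike_of_sum_sq_eq (m : ℕ) (H : Fin 4 → ℤ) (hsq : ∑ i, H i ^ 2 = 3 * 4 ^ (m + 1))
    (hsum : ∑ i, H i = 0) : IsSpike (2 ^ m) H := by
  induction m generalizing H with
  | zero => exact isSpike_one_of_sum_sq_eq_twelve H (by simpa using hsq) hsum
  | succ m ih =>
    have h8 : 8 ∣ ∑ i, H i ^ 2 := hsq ▸ ⟨6 * 4 ^ m, by ring⟩
    choose G hHG using two_dvd_of_eight_dvd_sum_sq H h8
    obtain rfl : H = fun i => 2 * G i := funext hHG
    simp only [mul_pow, ← Finset.mul_sum, pow_succ _ (m + 1)] at hsq hsum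
    have hG : IsSpike (2 ^ m) G := ih G (by linarith) (by linarith)
    rw [pow_succ']
    exact hG.two_mul

/-- The only integer solutions, up to permutation and overall sign, of
`H₁²+H₂²+H₃²+H₄² = 3·2^{n−2}`, `H₁+H₂+H₃+H₄ = 0` (n even, n ≥ 4) are
three entries `±2^{n/2−2}` and one entry `∓3·2^{n/2−2}`. -/
theorem diophantine_solutions_card_four
    (n : ℕ) (hn : Even n) (hn4 : 4 ≤ n) (H : Fin 4 → ℤ)
    (hsq : ∑ i, H i ^ 2 = 3 * 2 ^ (n - 2))
    (hsum : ∑ i, H i = 0) :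
    ∃ ε : ℤ, (ε = 1 ∨ ε = -1) ∧ ∃ j : Fin 4,
      H j = -ε * 3 * 2 ^ (n / 2 - 2) ∧
      ∀ i : Fin 4, i ≠ j → H i = ε * 2 ^ (n / 2 - 2) := by
  obtain ⟨k, rfl⟩ := hn
  have hpow : (2 : ℤ) ^ (k + k - 2) = 4 ^ ((k + k) / 2 - 2 + 1) := by
    rw [show (4 : ℤ) = 2 ^ 2 by norm_num, ← pow_mul]
    congr 1
    omega
  exact isSpike_of_sum_sq_eq _ H (hsq.trans (by rw [hpow])) hsum
end
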